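/- (Leibniz type rule for the Caputo–Hadamard derivative.) Let 0 < α < 1 and 0 < a < b. Suppose f = h ∘ ln and g = w ∘ ln on (0,∞) with h, w : ℝ → ℝ real-analytic with everywhere-convergent power series, and write f⁽ᵐ⁾(x) := h⁽ᵐ⁾(ln x) (so f⁽ᵐ⁾ = (x d/dx)^m f). Then for every x ∈ (a,b): (^{CH}D^{α}(f·g))(x) = Σ_{m=0}^∞ binom(α, m) f⁽ᵐ⁾(x) (^{CH}D^{α−m} g)(x) + g(a)(f(x) − f(a)) (ln x − ln a)^{−α} / Γ(1−α), the series converging. -/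

import Mathlib

open Real

/-- Generalized binomial coefficient `binom(γ, n) = γ(γ-1)⋯(γ-n+1)/n!`. -/
noncomputable def genBinom (γ : ℝ) (n : ℕ) : ℝ :=
  (∏ i ∈ Finset.range n, (γ - (i : ℝ))) / (n.factorial : ℝ)

/-- Ψ-Riemann–Liouville fractional integral of order `α` with base point `a`;
by convention the order-0 integral is the identity. -/
noncomputable def psiI (a : ℝ) (Ψ f : ℝ → ℝ) (α : ℝ) (x : ℝ) : ℝ :=
  if α = 0 then f x
  else (Real.Gamma α)⁻¹ * ∫ t in a..x, deriv Ψ t * (Ψ x - Ψ t) ^ (α - 1) * f t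

/-- Ψ-Riemann–Liouville fractional derivative of order `γ` (for `γ ≤ 0` it is the
fractional integral of order `-γ`, the order-0 case being the identity). -/
noncomputable def psiRLD (a : ℝ) (Ψ f : ℝ → ℝ) (γ : ℝ) (x : ℝ) : ℝ :=
  if γ ≤ 0 then psiI a Ψ f (-γ) x
  else (deriv Ψ x)⁻¹ * deriv (fun y => psiI a Ψ f (1 - γ) y) x

/-- Ψ-Caputo fractional derivative of order `γ` (for `γ ≤ 0` it is the
fractional integral of order `-γ`). -/
noncomputable def psiCD (a : ℝ) (Ψ f : ℝ → ℝ) (γ : ℝ) (x : ℝ) : ℝ :=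
  if γ ≤ 0 then psiI a Ψ f (-γ) x
  else psiI a Ψ (fun t => (deriv Ψ t)⁻¹ * deriv f t) (1 - γ) x

/-- Ψ-Hilfer fractional derivative of order `α` and type `β`. -/
noncomputable def psiHD (a : ℝ) (Ψ f : ℝ → ℝ) (α β : ℝ) (x : ℝ) : ℝ :=
  psiI a Ψ
    (fun y => (deriv Ψ y)⁻¹ * deriv (fun z => psiI a Ψ f ((1 - β) * (1 - α)) z) y)
    (β * (1 - α)) x

/-- Classical Riemann–Liouville fractional integral with base point `a`. -/
noncomputable def rlI (a : ℝ) (α : ℝ) (f : ℝ → ℝ) (x : ℝ) : ℝ :=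
  if α = 0 then f x
  else (Real.Gamma α)⁻¹ * ∫ t in a..x, (x - t) ^ (α - 1) * f t

/-- Classical Riemann–Liouville fractional derivative (fractional integral for `γ ≤ 0`). -/
noncomputable def rlD (a : ℝ) (γ : ℝ) (f : ℝ → ℝ) (x : ℝ) : ℝ :=
  if γ ≤ 0 then rlI a (-γ) f x
  else deriv (fun y => rlI a (1 - γ) f y) x

/-- Classical Caputo fractional derivative (fractional integral for `γ ≤ 0`). -/
noncomputable def capD (a : ℝ) (γ : ℝ) (f : ℝ → ℝ) (x : ℝ) : ℝ :=
  if γ ≤ 0 then rlI a (-γ) f x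
  else rlI a (1 - γ) (deriv f) x

/-- Classical Hilfer fractional derivative of order `α` and type `β`. -/
noncomputable def hilD (a : ℝ) (α β : ℝ) (f : ℝ → ℝ) (x : ℝ) : ℝ :=
  rlI a (β * (1 - α))
    (fun y => deriv (fun z => rlI a ((1 - β) * (1 - α)) f z) y) x

/-- Hadamard fractional integral with base point `a`. -/
noncomputable def hadI (a : ℝ) (α : ℝ) (f : ℝ → ℝ) (x : ℝ) : ℝ :=
  if α = 0 then f x
  else (Real.Gamma α)⁻¹ * ∫ t in a..x, (Real.log x - Real.log t) ^ (α - 1) * f t / t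

/-- Caputo–Hadamard fractional derivative (Hadamard fractional integral for `γ ≤ 0`). -/
noncomputable def chD (a : ℝ) (γ : ℝ) (f : ℝ → ℝ) (x : ℝ) : ℝ :=
  if γ ≤ 0 then hadI a (-γ) f x
  else hadI a (1 - γ) (fun t => t * deriv f t) x

/-- `h` is real-analytic with a power series converging on all of `ℝ`. -/
def EntireReal (h : ℝ → ℝ) : Prop :=
  ∃ p : FormalMultilinearSeries ℝ ℝ ℝ, HasFPowerSeriesOnBall h p 0 ⊤

/-! The substitution `t = exp s` turns the Hadamard integral and the Caputo–Hadamard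
derivative at `x` with base point `a` into the Riemann–Liouville integral and the Caputo
derivative at `U = log x` with base point `A = log a`, which reduces everything to the
Caputo Leibniz rule for `h * w`. Integrating `(U - s) ^ (-α) * (h * w)'` by parts against the primitive
`(U - s) ^ (-α) * (h s - h U) * w s` gives the boundary term, `h U` times the Caputo derivative
of `w`, and `α ∫ (U - s) ^ (-α) * dslope h U s * w s`. Expanding the difference quotient
`dslope h U` in its Taylor series at `U` and integrating termwise (dominated convergence) gives
the terms `m ≥ 1`, because `binom(α, n + 1) Γ(1 - α) = (-1) ^ n α Γ(n + 1 - α) / (n + 1)!`. -/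

open MeasureTheory Set intervalIntegral

lemma genBinom_succ (γ : ℝ) (n : ℕ) :
    genBinom γ (n + 1) = genBinom γ n * (γ - n) / (n + 1) := by
  simp only [genBinom, Finset.prod_range_succ, Nat.factorial_succ]
  push_cast
  field_simp

lemma genBinom_succ_mul_Gamma {α : ℝ} (hα : α < 1) (n : ℕ) :
    genBinom α (n + 1) * Gamma (1 - α) = (-1) ^ n * α / (n + 1).factorial * Gamma (n + 1 - α) := by
  induction n with
  | zero => simp [genBinom]
  | succ n ih =>
    have hne : (n : ℝ) + 1 - α ≠ 0 := by have : (0 : ℝ) ≤ n := n.cast_nonneg; linarith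
    rw [genBinom_succ, div_mul_eq_mul_div, mul_right_comm, ih,
      show ((n + 1 : ℕ) : ℝ) + 1 - α = (n + 1 - α) + 1 by push_cast; ring, Gamma_add_one hne]
    simp only [Nat.factorial_succ]
    push_cast
    field_simp
    ring

namespace EntireReal

variable {h : ℝ → ℝ}

lemma exists_hasFPowerSeriesOnBall (hh : EntireReal h) (U : ℝ) :
    ∃ q : FormalMultilinearSeries ℝ ℝ ℝ, HasFPowerSeriesOnBall h q U ⊤ := by
  obtain ⟨p, hp⟩ := hh
  have := hp.changeOrigin (y := U) (by simp)
  rw [zero_add, ENNReal.top_sub_coe] at this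
  exact ⟨_, this⟩

lemma contDiff (hh : EntireReal h) {n : WithTop ℕ∞} : ContDiff ℝ n h :=
  contDiff_iff_contDiffAt.mpr fun U =>
    (hh.exists_hasFPowerSeriesOnBall U).choose_spec.analyticAt.contDiffAt

lemma hasSum_taylorSeries (hh : EntireReal h) (U s : ℝ) :
    HasSum (fun n => iteratedDeriv n h U / n.factorial * (s - U) ^ n) (h s) := by
  obtain ⟨q, hq⟩ := hh.exists_hasFPowerSeriesOnBall U
  have H := hq.hasSum_iteratedFDeriv (y := s - U) (by simp)
  rw [add_sub_cancel] at H
  convert H using 2 with n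
  · rfl
  have hconst : (fun _ : Fin n => s - U) = fun _ => (s - U) • (1 : ℝ) := by simp
  rw [hconst, ContinuousMultilinearMap.map_smul_univ, iteratedDeriv_eq_iteratedFDeriv]
  simp only [Finset.prod_const, Finset.card_univ, Fintype.card_fin, smul_eq_mul]
  ring

lemma summable_abs_taylorCoeff_mul_pow (hh : EntireReal h) (U : ℝ) {r : ℝ} (hr : 0 ≤ r) :
    Summable fun n => |iteratedDeriv n h U / n.factorial| * r ^ n := by
  obtain ⟨q, hq⟩ := hh.exists_hasFPowerSeriesOnBall U
  refine (q.summable_norm_mul_pow (r := r.toNNReal)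
    (ENNReal.coe_lt_top.trans_le hq.r_le)).of_nonneg_of_le (fun n => by positivity) fun n => ?_
  have hcoeff : iteratedDeriv n h U = n.factorial * q.coeff n := by
    rw [iteratedDeriv_eq_iteratedFDeriv, ← hq.factorial_smul, nsmul_eq_mul,
      FormalMultilinearSeries.apply_eq_prod_smul_coeff]
    simp
  rw [hcoeff, mul_div_cancel_left₀ _ (by positivity),
    Real.coe_toNNReal _ hr, FormalMultilinearSeries.norm_apply_eq_norm_coef, norm_eq_abs]

lemma summable_abs_dslopeCoeff_mul_pow (hh : EntireReal h) (U : ℝ) {r : ℝ} (hr : 0 ≤ r) :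
    Summable fun n => |iteratedDeriv (n + 1) h U / (n + 1).factorial| * r ^ n := by
  refine ((summable_nat_add_iff 1).mpr (hh.summable_abs_taylorCoeff_mul_pow U
    (by linarith : 0 ≤ r + 1))).of_nonneg_of_le (fun n => by positivity) fun n => ?_
  gcongr
  calc r ^ n ≤ (r + 1) ^ n := pow_le_pow_left₀ hr (by linarith) n
    _ ≤ (r + 1) ^ (n + 1) := pow_le_pow_right₀ (by linarith) n.le_succ

lemma hasSum_dslope (hh : EntireReal h) (U s : ℝ) :
    HasSum (fun n => iteratedDeriv (n + 1) h U / (n + 1).factorial * (s - U) ^ n)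
      (dslope h U s) := by
  rcases eq_or_ne s U with rfl | hsU
  · rw [dslope_same, ← iteratedDeriv_one]
    convert hasSum_ite_eq 0 (iteratedDeriv 1 h s) using 2 with n
    rcases n with _ | n <;> simp
  · have H := (hasSum_nat_add_iff' 1).mpr (hh.hasSum_taylorSeries U s)
    simp only [Finset.sum_range_one, pow_zero, iteratedDeriv_zero, Nat.factorial_zero,
      Nat.cast_one, div_one, mul_one] at H
    rw [dslope_of_ne _ hsU, slope_def_field]
    convert H.div_const (s - U) using 2 with n
    · rfl
    rw [pow_succ]
    field_simp [sub_ne_zero.mpr hsU]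

end EntireReal

lemma integral_comp_log_div {a x : ℝ} (ha : 0 < a) (hax : a ≤ x) (G : ℝ → ℝ) :
    ∫ t in a..x, G (log t) / t = ∫ s in log a..log x, G s := by
  have hpos : ∀ t ∈ Ioc a x, 0 < t := fun t ht => ha.trans ht.1
  rw [integral_of_le hax, integral_of_le (log_le_log ha hax), ← image_log_Ioc ha hax,
    integral_image_eq_integral_abs_deriv_smul measurableSet_Ioc
      (fun t ht => (hasDerivAt_log (hpos t ht).ne').hasDerivWithinAt)
      (log_injOn_pos.mono fun t ht => (hpos t ht))]
  refine setIntegral_congr_fun measurableSet_Ioc fun t ht => ?_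
  rw [abs_of_pos (inv_pos.mpr (hpos t ht)), smul_eq_mul, div_eq_inv_mul]

lemma hadI_eq_rlI_log {a x : ℝ} (ha : 0 < a) (hax : a ≤ x) (β : ℝ) {F v : ℝ → ℝ}
    (hFv : ∀ t ∈ Icc a x, F t = v (log t)) :
    hadI a β F x = rlI (log a) β v (log x) := by
  unfold hadI rlI
  split_ifs
  · exact hFv x ⟨hax, le_rfl⟩
  rw [← integral_comp_log_div ha hax]
  congr 1
  refine integral_congr fun t ht => ?_
  rw [uIcc_of_le hax] at ht
  simp only [hFv t ht]

lemma chD_eq_capD_log {a x : ℝ} (ha : 0 < a) (hax : a ≤ x) (γ : ℝ) {F v : ℝ → ℝ}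
    (hFv : ∀ t > 0, F t = v (log t)) (hv : Differentiable ℝ v) :
    chD a γ F x = capD (log a) γ v (log x) := by
  have hpos : ∀ t ∈ Icc a x, 0 < t := fun t ht => ha.trans_le ht.1
  unfold chD capD
  split_ifs
  · exact hadI_eq_rlI_log ha hax _ fun t ht => hFv t (hpos t ht)
  refine hadI_eq_rlI_log ha hax _ fun t ht => ?_
  have hF : F =ᶠ[nhds t] v ∘ log :=
    Filter.eventuallyEq_of_mem (Ioi_mem_nhds (hpos t ht)) fun u hu => hFv u hu
  rw [hF.deriv_eq, ((hv _).hasDerivAt.comp t (hasDerivAt_log (hpos t ht).ne')).deriv]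
  field_simp [(hpos t ht).ne']

lemma intervalIntegrable_sub_rpow_mul {A U c : ℝ} (hc : -1 < c) {v : ℝ → ℝ}
    (hv : ContinuousOn v (uIcc A U)) :
    IntervalIntegrable (fun s => (U - s) ^ c * v s) volume A U := by
  have h0 : IntervalIntegrable (fun y : ℝ => y ^ c) volume 0 (U - A) :=
    intervalIntegrable_rpow' hc
  have h1 := (h0.comp_sub_left U).symm
  simp only [sub_zero, sub_sub_cancel] at h1
  exact h1.mul_continuousOn hv

lemma integral_sub_rpow_mul_deriv_mul {α A U : ℝ} (hα : α < 1) (hAU : A ≤ U) {h w : ℝ → ℝ}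
    (hh : ContDiff ℝ 1 h) (hw : ContDiff ℝ 1 w) :
    ∫ s in A..U, (U - s) ^ (-α) * (deriv h s * w s + h s * deriv w s) =
      h U * (∫ s in A..U, (U - s) ^ (-α) * deriv w s)
        + α * (∫ s in A..U, (U - s) ^ (-α) * (dslope h U s * w s))
        + (U - A) ^ (-α) * (h U - h A) * w A := by
  have hhd : Differentiable ℝ h := hh.differentiable one_ne_zero
  have hwd : Differentiable ℝ w := hw.differentiable one_ne_zero
  have hd : Continuous (dslope h U) := continuousOn_univ.mp
    ((continuousOn_dslope Filter.univ_mem).mpr ⟨hh.continuous.continuousOn, hhd U⟩)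
  have hsub : ∀ s, h s - h U = (s - U) * dslope h U s := fun s => (sub_smul_dslope h U s).symm
  set G : ℝ → ℝ := fun s => (U - s) ^ (-α) * ((h s - h U) * w s)
  -- `G` is `-(U - s) ^ (1 - α) * dslope h U s * w s`, hence continuous up to `s = U`
  have hG : ContinuousOn G (Icc A U) := by
    refine ContinuousOn.congr (f := fun s => -((U - s) ^ (1 - α) * (dslope h U s * w s)))
      (Continuous.continuousOn ?_) fun s hs => ?_
    · exact ((continuous_const.sub continuous_id).rpow_const fun _ => Or.inr (by linarith)).mul
        (hd.mul hw.continuous) |>.neg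
    · simp only [G]
      rw [show 1 - α = -α + 1 by ring,
        rpow_add' (sub_nonneg.mpr hs.2) (by linarith : 0 < -α + 1).ne', rpow_one, hsub]
      ring
  have hG' : ∀ s ∈ Ioo A U, HasDerivWithinAt G ((U - s) ^ (-α) *
      ((deriv h s * w s + h s * deriv w s) - h U * deriv w s - α * (dslope h U s * w s)))
      (Ioi s) s := by
    intro s hs
    have hUs : U - s ≠ 0 := by linarith [hs.2]
    have hk := ((hasDerivAt_id s).const_sub U).rpow_const (p := -α) (Or.inl hUs)
    have hm := (((hhd s).hasDerivAt).sub_const (h U)).mul (hwd s).hasDerivAt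
    refine ((hk.mul hm).congr_deriv ?_).hasDerivWithinAt
    simp only [id, Pi.mul_apply]
    rw [rpow_sub_one hUs, show h s = h U + (s - U) * dslope h U s by linarith [hsub s]]
    field_simp
    ring
  have hI : ∀ v : ℝ → ℝ, Continuous v →
      IntervalIntegrable (fun s => (U - s) ^ (-α) * v s) volume A U :=
    fun v hv => intervalIntegrable_sub_rpow_mul (by linarith) hv.continuousOn
  have hsplit : ∫ s in A..U, (U - s) ^ (-α) *
      ((deriv h s * w s + h s * deriv w s) - h U * deriv w s - α * (dslope h U s * w s)) =
      (∫ s in A..U, (U - s) ^ (-α) * (deriv h s * w s + h s * deriv w s))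
        - h U * (∫ s in A..U, (U - s) ^ (-α) * deriv w s)
        - α * (∫ s in A..U, (U - s) ^ (-α) * (dslope h U s * w s)) := by
    have hX := hI (fun s => deriv h s * w s + h s * deriv w s) (by fun_prop)
    have hY := (hI (deriv w) (by fun_prop)).const_mul (h U)
    have hZ := (hI (fun s => dslope h U s * w s) (by fun_prop)).const_mul α
    rw [← intervalIntegral.integral_const_mul, ← intervalIntegral.integral_const_mul,
      ← intervalIntegral.integral_sub hX hY, ← intervalIntegral.integral_sub (hX.sub hY) hZ]
    exact integral_congr fun s _ => by ring
  have hFTC := integral_eq_sub_of_hasDeriv_right_of_le hAU hG hG' (hI _ (by fun_prop))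
  rw [hsplit] at hFTC
  simp only [G, sub_self, zero_mul, mul_zero, zero_sub] at hFTC
  linear_combination hFTC

lemma hasSum_integral_mul_sub_pow_mul {A U : ℝ} (hAU : A ≤ U) {c : ℕ → ℝ}
    (hc : Summable fun n => |c n| * (U - A) ^ n) {K : ℝ → ℝ}
    (hK : IntervalIntegrable K volume A U) :
    HasSum (fun n => ∫ s in A..U, c n * (s - U) ^ n * K s)
      (∫ s in A..U, (∑' n, c n * (s - U) ^ n) * K s) := by
  have hbound : ∀ s ∈ uIoc A U, ∀ n, |c n * (s - U) ^ n| ≤ |c n| * (U - A) ^ n := by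
    intro s hs n
    rw [uIoc_of_le hAU] at hs
    rw [abs_mul, abs_pow, abs_sub_comm]
    gcongr
    rw [abs_of_nonneg (by linarith [hs.2])]
    linarith [hs.1]
  refine hasSum_integral_of_dominated_convergence (fun n s => |c n| * (U - A) ^ n * ‖K s‖)
    (fun n => ((by fun_prop : Continuous fun s => c n * (s - U) ^ n).aestronglyMeasurable).mul
      hK.def'.aestronglyMeasurable)
    (fun n => ae_of_all _ fun s hs => ?_) (ae_of_all _ fun _ _ => hc.mul_right _) ?_
    (ae_of_all _ fun s hs => ?_)
  · rw [norm_mul]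
    exact mul_le_mul_of_nonneg_right (hbound s hs n) (norm_nonneg _)
  · simp_rw [tsum_mul_right]
    exact hK.norm.const_mul _
  · exact (Summable.of_norm_bounded hc (hbound s hs)).hasSum.mul_right (K s)

lemma EntireReal.hasSum_integral_sub_rpow_mul_dslope_mul {h : ℝ → ℝ} (hh : EntireReal h)
    {α A U : ℝ} (hα : α < 1) (hAU : A ≤ U) {w : ℝ → ℝ} (hw : ContinuousOn w (uIcc A U)) :
    HasSum (fun n => (-1) ^ n * (iteratedDeriv (n + 1) h U / (n + 1).factorial) *
        ∫ s in A..U, (U - s) ^ ((n : ℝ) - α) * w s)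
      (∫ s in A..U, (U - s) ^ (-α) * (dslope h U s * w s)) := by
  have H := hasSum_integral_mul_sub_pow_mul hAU
    (hh.summable_abs_dslopeCoeff_mul_pow U (sub_nonneg.mpr hAU))
    (intervalIntegrable_sub_rpow_mul (c := -α) (by linarith) hw)
  convert H using 1
  · funext n
    rw [← intervalIntegral.integral_const_mul]
    refine integral_congr_Ioo_of_le hAU fun s hs => ?_
    have hUs : U - s ≠ 0 := by linarith [hs.2]
    rw [sub_eq_neg_add (n : ℝ), rpow_add_natCast hUs, show s - U = -(U - s) by ring,
      neg_pow (U - s)]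
    ring
  · refine integral_congr fun s _ => ?_
    simp only [(hh.hasSum_dslope U s).tsum_eq]
    ring

lemma capD_eq_of_pos {α : ℝ} (hα0 : 0 < α) (hα1 : α < 1) (A U : ℝ) (v : ℝ → ℝ) :
    capD A α v U = (Gamma (1 - α))⁻¹ * ∫ s in A..U, (U - s) ^ (-α) * deriv v s := by
  rw [capD, if_neg hα0.not_ge, rlI, if_neg (by linarith), sub_sub_cancel_left]

lemma capD_sub_natCast_succ {α : ℝ} (hα : α < 1) (n : ℕ) (A U : ℝ) (v : ℝ → ℝ) :
    capD A (α - (n + 1 : ℕ)) v U =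
      (Gamma (n + 1 - α))⁻¹ * ∫ s in A..U, (U - s) ^ ((n : ℝ) - α) * v s := by
  have hn : (0 : ℝ) ≤ n := n.cast_nonneg
  push_cast
  rw [capD, if_pos (by linarith), rlI, if_neg (by linarith), neg_sub,
    show (n : ℝ) + 1 - α - 1 = n - α by ring]

theorem hasSum_capD_mul {α A U : ℝ} (hα0 : 0 < α) (hα1 : α < 1) (hAU : A ≤ U) {h w : ℝ → ℝ}
    (hh : EntireReal h) (hw : ContDiff ℝ 1 w) :
    HasSum (fun m : ℕ => genBinom α m * iteratedDeriv m h U * capD A (α - m) w U)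
      (capD A α (fun s => h s * w s) U - w A * (h U - h A) * (U - A) ^ (-α) / Gamma (1 - α)) := by
  have hh1 : ContDiff ℝ 1 h := hh.contDiff
  have hprod : deriv (fun s => h s * w s) = fun s => deriv h s * w s + h s * deriv w s :=
    funext fun s => deriv_mul (hh1.differentiable one_ne_zero s) (hw.differentiable one_ne_zero s)
  have hΓ : Gamma (1 - α) ≠ 0 := (Gamma_pos_of_pos (by linarith)).ne'
  rw [← hasSum_nat_add_iff' 1]
  simp only [Finset.sum_range_one, Nat.cast_zero, sub_zero, iteratedDeriv_zero]
  rw [capD_eq_of_pos hα0 hα1, capD_eq_of_pos hα0 hα1, hprod,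
    integral_sub_rpow_mul_deriv_mul hα1 hAU hh1 hw]
  convert (hh.hasSum_integral_sub_rpow_mul_dslope_mul hα1 hAU
    hw.continuous.continuousOn).mul_left (α / Gamma (1 - α)) using 1
  · rfl
  · funext n
    have hΓn : Gamma (n + 1 - α) ≠ 0 :=
      (Gamma_pos_of_pos (by linarith [n.cast_nonneg (α := ℝ)])).ne'
    rw [capD_sub_natCast_succ hα1, eq_div_iff hΓ |>.mpr (genBinom_succ_mul_Gamma hα1 n)]
    field_simp
  · rw [show genBinom α 0 = 1 by simp [genBinom]]
    field_simp
    ring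

theorem leibniz_Caputo_Hadamard_general
    (a b : ℝ) (ha : 0 < a) (α : ℝ) (hα0 : 0 < α) (hα1 : α < 1)
    (f g h w : ℝ → ℝ)
    (hf : ∀ t > (0 : ℝ), f t = h (Real.log t))
    (hg : ∀ t > (0 : ℝ), g t = w (Real.log t))
    (hh : EntireReal h) (hw : EntireReal w)
    (x : ℝ) (hx : x ∈ Set.Ioo a b) :
    HasSum
      (fun m : ℕ => genBinom α m * iteratedDeriv m h (Real.log x) * chD a (α - m) g x)
      (chD a α (fun t => f t * g t) x -
        g a * (f x - f a) * (Real.log x - Real.log a) ^ (-α) / Real.Gamma (1 - α)) := by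
  have hax : a ≤ x := hx.1.le
  have hfg : ∀ t > (0 : ℝ), f t * g t = h (log t) * w (log t) := fun t ht => by
    rw [hf t ht, hg t ht]
  have hhw : Differentiable ℝ fun s => h s * w s :=
    (hh.contDiff.mul hw.contDiff).differentiable one_ne_zero
  simp only [chD_eq_capD_log ha hax _ hg (hw.contDiff.differentiable one_ne_zero),
    chD_eq_capD_log ha hax _ hfg hhw, hf x (ha.trans hx.1), hf a ha, hg a ha]
  exact hasSum_capD_mul hα0 hα1 (log_le_log ha hax) hh hw.contDiff

/-- Leibniz type rule for the Caputo–Hadamard fractional derivative. -/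
theorem leibniz_Caputo_Hadamard
    (a b : ℝ) (ha : 0 < a) (hab : a < b) (α : ℝ) (hα0 : 0 < α) (hα1 : α < 1)
    (f g h w : ℝ → ℝ)
    (hf : ∀ t > (0 : ℝ), f t = h (Real.log t))
    (hg : ∀ t > (0 : ℝ), g t = w (Real.log t))
    (hh : EntireReal h) (hw : EntireReal w)
    (x : ℝ) (hx : x ∈ Set.Ioo a b) :
    HasSum
      (fun m : ℕ => genBinom α m * iteratedDeriv m h (Real.log x) * chD a (α - m) g x)
      (chD a α (fun t => f t * g t) x -
        g a * (f x - f a) * (Real.log x - Real.log a) ^ (-α) / Real.Gamma (1 - α)) :=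
  leibniz_Caputo_Hadamard_general a b ha α hα0 hα1 f g h w hf hg hh hw x hx
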